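/- Suppose a model's predictions are perfectly calibrated, i.e., for every bucket B_i, E[C | B_i] = E[A | B_i]. Then the expected value of the binned squared ECE estimator equals (1/n)Σᵢ V[C − A | B_i] ≥ 0, with equality only if C − A is almost surely constant in every bucket; thus the estimator is positively biased for calibrated models. -/

import Mathlib

/-!
In bucket `i` the difference of the two sample means is the sample mean of `D = C - A` over
`nn i` independent draws. Calibration makes `D` centred, so by independence the expected square
of that sample mean is `Var D / nn i`; weighting by `nn i / n` and summing gives
`(1/n) ∑ᵢ Var D`. A vanishing variance forces `D` to be almost surely equal to its mean.
-/

open MeasureTheory ProbabilityTheory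

noncomputable def sampleMean {Ω : Type*} {k : ℕ} (f : Ω → ℝ) (x : Fin k → Ω) : ℝ :=
  (1 / (k : ℝ)) * ∑ j, f (x j)

lemma sampleMean_sub {Ω : Type*} {k : ℕ} (f g : Ω → ℝ) (x : Fin k → Ω) :
    sampleMean f x - sampleMean g x = sampleMean (fun ω => f ω - g ω) x := by
  simp only [sampleMean, ← mul_sub, ← Finset.sum_sub_distrib]

section SampleMean

variable {Ω : Type*} [MeasurableSpace Ω] {ν : Measure Ω} [IsProbabilityMeasure ν] {k : ℕ}
  {f : Ω → ℝ}

lemma memLp_sampleMean {p : ENNReal} (hf : MemLp f p ν) :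
    MemLp (sampleMean (k := k) f) p (Measure.pi fun _ => ν) :=
  (memLp_finsetSum _ fun j _ =>
    hf.comp_measurePreserving (measurePreserving_eval _ j)).const_mul _

lemma integral_sampleMean (hk : k ≠ 0) (hf : Integrable f ν) :
    ∫ x, sampleMean (k := k) f x ∂(Measure.pi fun _ => ν) = ∫ ω, f ω ∂ν := by
  simp only [sampleMean, integral_const_mul]
  rw [integral_finsetSum _ fun j _ => integrable_comp_eval hf]
  simp only [integral_comp_eval (μ := fun _ : Fin k => ν) hf.aestronglyMeasurable,
    Finset.sum_const, Finset.card_univ, Fintype.card_fin, nsmul_eq_mul]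
  field_simp

lemma variance_sampleMean (hf : MemLp f 2 ν) :
    variance (sampleMean (k := k) f) (Measure.pi fun _ => ν) = variance f ν / k := by
  have hsum : variance (fun x : Fin k → Ω => ∑ j, f (x j)) (Measure.pi fun _ => ν)
      = k * variance f ν := by
    have := variance_sum_pi (μ := fun _ : Fin k => ν) fun _ => hf
    simp only [Finset.sum_fn, Finset.sum_const, Finset.card_univ, Fintype.card_fin,
      nsmul_eq_mul] at this
    exact this
  unfold sampleMean
  rw [variance_const_mul, hsum]
  rcases eq_or_ne (k : ℝ) 0 with hk | hk
  · simp [hk]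
  · field_simp

lemma integral_sampleMean_sq (hk : k ≠ 0) (hf : MemLp f 2 ν) :
    ∫ x, sampleMean f x ^ 2 ∂(Measure.pi fun _ : Fin k => ν)
      = variance f ν / k + (∫ ω, f ω ∂ν) ^ 2 := by
  have hmean := memLp_sampleMean (k := k) hf
  rw [← variance_sampleMean hf, variance_eq_sub hmean,
    integral_sampleMean hk (hf.integrable one_le_two)]
  simp

end SampleMean

lemma integral_sum_comp_eval {ι E : Type*} [Fintype ι] [NormedAddCommGroup E] [NormedSpace ℝ E]
    {X : ι → Type*} [∀ i, MeasurableSpace (X i)] {μ : ∀ i, Measure (X i)}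
    [∀ i, IsProbabilityMeasure (μ i)] {g : ∀ i, X i → E} (hg : ∀ i, Integrable (g i) (μ i)) :
    ∫ x, ∑ i, g i (x i) ∂Measure.pi μ = ∑ i, ∫ y, g i y ∂μ i := by
  rw [integral_finsetSum _ fun i _ => integrable_comp_eval (hg i)]
  exact Finset.sum_congr rfl fun i _ => integral_comp_eval (hg i).aestronglyMeasurable

theorem binned_sq_ece_bias_calibrated_general {Ω : Type*} [MeasurableSpace Ω]
    (m : ℕ) (μ : Fin m → Measure Ω) [∀ i, IsProbabilityMeasure (μ i)]
    (C A : Ω → ℝ) (nn : Fin m → ℕ) (n : ℕ)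
    (hpos : ∀ i, 0 < nn i) (hn : n = ∑ i, nn i)
    (hC2 : ∀ i, MemLp C 2 (μ i)) (hA2 : ∀ i, MemLp A 2 (μ i))
    (hcal : ∀ i, ∫ ω, C ω ∂(μ i) = ∫ ω, A ω ∂(μ i)) :
    (∫ ω : Π i : Fin m, Fin (nn i) → Ω,
        ∑ i, ((nn i : ℝ) / n) *
          ((1 / (nn i : ℝ)) * ∑ j, C (ω i j) - (1 / (nn i : ℝ)) * ∑ j, A (ω i j)) ^ 2
        ∂(Measure.pi fun i => Measure.pi fun _ : Fin (nn i) => μ i))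
      = (1 / (n : ℝ)) * ∑ i, variance (fun ω => C ω - A ω) (μ i) ∧
    0 ≤ (1 / (n : ℝ)) * ∑ i, variance (fun ω => C ω - A ω) (μ i) ∧
    ((1 / (n : ℝ)) * (∑ i, variance (fun ω => C ω - A ω) (μ i)) = 0 →
      ∀ i, ∃ c : ℝ, (fun ω => C ω - A ω) =ᵐ[μ i] fun _ => c) := by
  have hD2 i : MemLp (fun ω => C ω - A ω) 2 (μ i) := (hC2 i).sub (hA2 i)
  have hD0 i : ∫ ω, C ω - A ω ∂(μ i) = 0 := by
    rw [integral_sub ((hC2 i).integrable one_le_two) ((hA2 i).integrable one_le_two), hcal i,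
      sub_self]
  refine ⟨?_, mul_nonneg (by positivity) (Finset.sum_nonneg fun i _ => variance_nonneg _ _),
    fun h0 i => ?_⟩
  · calc _ = ∫ ω : Π i : Fin m, Fin (nn i) → Ω,
          ∑ i, ((nn i : ℝ) / n) * sampleMean (fun ω => C ω - A ω) (ω i) ^ 2
          ∂(Measure.pi fun i => Measure.pi fun _ : Fin (nn i) => μ i) := by
          simp only [← sampleMean_sub]; rfl
      _ = ∑ i, ((nn i : ℝ) / n) * (variance (fun ω => C ω - A ω) (μ i) / nn i) := by
          rw [integral_sum_comp_eval fun i =>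
            ((memLp_sampleMean (hD2 i)).integrable_sq).const_mul _]
          simp only [integral_const_mul, integral_sampleMean_sq (hpos _).ne' (hD2 _), hD0]
          simp
      _ = _ := by
          rw [Finset.mul_sum]
          refine Finset.sum_congr rfl fun i _ => ?_
          have : (nn i : ℝ) ≠ 0 := by exact_mod_cast (hpos i).ne'
          field_simp
  · have hn0 : (n : ℝ) ≠ 0 := by
      rw [hn]; exact_mod_cast (Finset.sum_pos (fun j _ => hpos j) ⟨i, Finset.mem_univ i⟩).ne'
    have hvar : variance (fun ω => C ω - A ω) (μ i) = 0 :=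
      (Finset.sum_eq_zero_iff_of_nonneg fun j _ => variance_nonneg _ _).mp
        ((mul_eq_zero.mp h0).resolve_left (by simpa using hn0)) i (Finset.mem_univ i)
    exact ⟨_, ae_eq_integral_of_variance_eq_zero (hD2 i) hvar⟩

/-- If the model is perfectly calibrated (`E[C | B_i] = E[A | B_i]` in every bucket), the
expectation of the binned squared ECE estimator equals `(1/n)∑ᵢ V[C − A | B_i] ≥ 0`, with
equality only if `C − A` is almost surely constant in every bucket; thus the estimator is
positively biased for calibrated models. -/
theorem binned_sq_ece_bias_calibrated {Ω : Type*} [MeasurableSpace Ω]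
    (m : ℕ) (μ : Fin m → Measure Ω) [∀ i, IsProbabilityMeasure (μ i)]
    (C A : Ω → ℝ) (nn : Fin m → ℕ) (n : ℕ)
    (hpos : ∀ i, 0 < nn i) (hn : n = ∑ i, nn i)
    (hC2 : ∀ i, MemLp C 2 (μ i)) (hA2 : ∀ i, MemLp A 2 (μ i))
    (hCrange : ∀ ω, C ω ∈ Set.Icc (0 : ℝ) 1)
    (hA01 : ∀ ω, A ω = 0 ∨ A ω = 1)
    (hcal : ∀ i, ∫ ω, C ω ∂(μ i) = ∫ ω, A ω ∂(μ i)) :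
    (∫ ω : Π i : Fin m, Fin (nn i) → Ω,
        ∑ i, ((nn i : ℝ) / n) *
          ((1 / (nn i : ℝ)) * ∑ j, C (ω i j) - (1 / (nn i : ℝ)) * ∑ j, A (ω i j)) ^ 2
        ∂(Measure.pi fun i => Measure.pi fun _ : Fin (nn i) => μ i))
      = (1 / (n : ℝ)) * ∑ i, variance (fun ω => C ω - A ω) (μ i) ∧
    0 ≤ (1 / (n : ℝ)) * ∑ i, variance (fun ω => C ω - A ω) (μ i) ∧
    ((1 / (n : ℝ)) * (∑ i, variance (fun ω => C ω - A ω) (μ i)) = 0 →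
      ∀ i, ∃ c : ℝ, (fun ω => C ω - A ω) =ᵐ[μ i] fun _ => c) :=
  binned_sq_ece_bias_calibrated_general m μ C A nn n hpos hn hC2 hA2 hcal
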